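/- Let V be a finite-dimensional vector space over ℚ and let A, B ≥ 0 be integers with A ≠ B. Then the space of GL(V)-invariants of V^{⊗A} ⊗ (V*)^{⊗B} (under the diagonal action) is zero. -/

import Mathlib

open TensorProduct

/-- The diagonal action of an invertible endomorphism `g` of `V` on
`V^{⊗A} ⊗ (V^*)^{⊗B}`: `g` acts on every factor `V` in the standard way and on every
factor `V^*` by the contragredient (dual of `g⁻¹`) action. -/
noncomputable def glAction (V : Type) [AddCommGroup V] [Module ℚ V] (A B : ℕ)
    (g : (V →ₗ[ℚ] V)ˣ) :
    (PiTensorProduct ℚ (fun _ : Fin A => V)) ⊗[ℚ]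
      (PiTensorProduct ℚ (fun _ : Fin B => Module.Dual ℚ V)) →ₗ[ℚ]
    (PiTensorProduct ℚ (fun _ : Fin A => V)) ⊗[ℚ]
      (PiTensorProduct ℚ (fun _ : Fin B => Module.Dual ℚ V)) :=
  TensorProduct.map
    (PiTensorProduct.map fun _ => (g : V →ₗ[ℚ] V))
    (PiTensorProduct.map fun _ => LinearMap.dualMap ((g⁻¹ : (V →ₗ[ℚ] V)ˣ) : V →ₗ[ℚ] V))

/-!
The scalar `c • id_V` (`c ∈ ℚˣ`) acts by `c` on each factor `V` and by `c⁻¹` on each factor `V^*`,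
hence by `c ^ (A - B)` on `V^{⊗A} ⊗ (V^*)^{⊗B}`. For `c = 2` and `A ≠ B` this scalar is not `1`,
so an invariant vector must vanish.
-/

theorem PiTensorProduct.map_smul_id {R ι M : Type*} [CommSemiring R] [Fintype ι]
    [AddCommMonoid M] [Module R M] (c : R) :
    PiTensorProduct.map (fun _ : ι => c • (LinearMap.id : M →ₗ[R] M)) =
      c ^ Fintype.card ι • LinearMap.id := by
  ext f
  simp [MultilinearMap.map_smul_univ]

theorem eq_zero_of_smul_eq_self {R M : Type*} [Ring R] [IsCancelMulZero R] [AddCommGroup M]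
    [Module R M] [Module.IsTorsionFree R M] {c : R} {x : M} (hc : c ≠ 1) (hx : c • x = x) :
    x = 0 := by
  by_contra hx0
  exact hc (smul_left_injective R hx0 (by simpa using hx))

theorem glAction_units_map_algebraMap (V : Type) [AddCommGroup V] [Module ℚ V] (A B : ℕ)
    (c : ℚˣ) :
    glAction V A B (Units.map (algebraMap ℚ (Module.End ℚ V)) c) =
      ((c : ℚ) ^ ((A : ℤ) - B)) • LinearMap.id := by
  have hdual (a : ℚ) :
      LinearMap.dualMap (algebraMap ℚ (Module.End ℚ V) a) = a • LinearMap.id := by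
    ext φ v
    simp
  rw [glAction, Units.coe_map, Units.coe_map_inv, MonoidHom.coe_coe, hdual,
    Module.algebraMap_end_eq_smul_id, PiTensorProduct.map_smul_id, PiTensorProduct.map_smul_id,
    TensorProduct.map_smul_left, TensorProduct.map_smul_right, TensorProduct.map_id, smul_smul,
    Fintype.card_fin, Fintype.card_fin, zpow_sub₀ c.ne_zero, zpow_natCast, zpow_natCast,
    Units.val_inv_eq_inv_val, inv_pow, div_eq_mul_inv]

theorem stmt_3_general (V : Type) [AddCommGroup V] [Module ℚ V]
    (A B : ℕ) (hAB : A ≠ B)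
    (x : (PiTensorProduct ℚ (fun _ : Fin A => V)) ⊗[ℚ]
      (PiTensorProduct ℚ (fun _ : Fin B => Module.Dual ℚ V)))
    (hx : ∀ g : (V →ₗ[ℚ] V)ˣ, glAction V A B g x = x) :
    x = 0 := by
  have h_ne_one : (2 : ℚ) ^ ((A : ℤ) - B) ≠ 1 := by
    rw [Ne, zpow_eq_one_iff_right₀ zero_le_two (by norm_num), sub_eq_zero, Nat.cast_inj]
    exact hAB
  have h_fixed := hx (Units.map (algebraMap ℚ (Module.End ℚ V)) (Units.mk0 (2 : ℚ) two_ne_zero))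
  rw [glAction_units_map_algebraMap, LinearMap.smul_apply, LinearMap.id_apply] at h_fixed
  exact eq_zero_of_smul_eq_self h_ne_one h_fixed

/-- for a finite-dimensional `ℚ`-vector space `V` and `A ≠ B`, the space of
`GL(V)`-invariants of `V^{⊗A} ⊗ (V^*)^{⊗B}` is zero. -/
theorem stmt_3 (V : Type) [AddCommGroup V] [Module ℚ V] [FiniteDimensional ℚ V]
    (A B : ℕ) (hAB : A ≠ B)
    (x : (PiTensorProduct ℚ (fun _ : Fin A => V)) ⊗[ℚ]
      (PiTensorProduct ℚ (fun _ : Fin B => Module.Dual ℚ V)))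
    (hx : ∀ g : (V →ₗ[ℚ] V)ˣ, glAction V A B g x = x) :
    x = 0 :=
  stmt_3_general V A B hAB x hx
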